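/- Let ξ > 0, μ ∈ ℝ, σ > 0, k > 0, and let X be a negative random variable with distribution function L_{2,ξ}(·; μ, σ). Then the k-th absolute moment of X exists and E(|X|^k) = e^{k(μ + σ/ξ)} · M_{Y^{−1}}(kσ/ξ; 1/ξ), where M_{Y^{−1}}(t; α) = α ∫_0^∞ x^{α−1} exp(−t/x − x^α) dx. -/

import Mathlib

open MeasureTheory Filter Real Set

/-- The log-GEV distribution function `L_{1,ξ}(x; μ, σ)` (positive support). -/
noncomputable def L1 (ξ μ σ x : ℝ) : ℝ :=
  if 0 < x then
    if 0 < 1 + (ξ / σ) * Real.log (Real.exp (-μ) * x) then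
      Real.exp (-(1 + (ξ / σ) * Real.log (Real.exp (-μ) * x)) ^ (-1 / ξ))
    else if 0 < ξ then 0 else 1
  else 0

/-- The negative log-GEV distribution function `L_{2,ξ}(x; μ, σ)` (negative support). -/
noncomputable def L2 (ξ μ σ x : ℝ) : ℝ :=
  if x < 0 then
    if 0 < 1 - (ξ / σ) * Real.log (Real.exp (-μ) * |x|) then
      Real.exp (-(1 - (ξ / σ) * Real.log (Real.exp (-μ) * |x|)) ^ (-1 / ξ))
    else if 0 < ξ then 0 else 1
  else 1

/-- `M_{Y⁻¹}(t; α) = α ∫_0^∞ x^{α-1} exp(-t/x - x^α) dx`, where `Y` is a standard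
Weibull random variable with shape parameter `α`. -/
noncomputable def weibullInvMgf (t α : ℝ) : ℝ :=
  α * ∫ x in Set.Ioi (0 : ℝ), x ^ (α - 1) * Real.exp (-t / x - x ^ α)

/-!
`X` has the law of `-exp (μ + (σ/ξ)(1 - 1/V))` with `V` standard Weibull of shape `1/ξ`: for
`x < 0` the event `-exp (μ + (σ/ξ)(1 - 1/V)) ≤ x` is `{c V ≥ 1}` with
`c = 1 - (ξ/σ) log (e^{-μ} |x|)`, of probability `exp (-c^{-1/ξ}) = L_{2,ξ}(x; μ, σ)` when `c > 0`,
and empty otherwise. Hence `|X|^k` has the law of `e^{k(μ + σ/ξ)} e^{-(kσ/ξ)/V}`, and integrating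
`e^{-t/V}` against the Weibull density gives exactly `M_{Y⁻¹}(t; 1/ξ)`.
-/

open scoped Topology

namespace ProbabilityTheory

noncomputable def weibullMeasure (α : ℝ) : Measure ℝ :=
  (volume.restrict (Ioi 0)).withDensity fun v => ENNReal.ofReal (α * v ^ (α - 1) * exp (-v ^ α))

variable {α : ℝ}

lemma hasDerivAt_neg_exp_neg_rpow {v : ℝ} (hv : 0 < v) :
    HasDerivAt (fun v => -exp (-v ^ α)) (α * v ^ (α - 1) * exp (-v ^ α)) v :=
  ((Real.hasDerivAt_rpow_const (p := α) (Or.inl hv.ne')).neg.exp).neg.congr_deriv <| by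
    simp only [Pi.neg_apply]
    ring

lemma weibullMeasure_Ioi (hα : 0 < α) {a : ℝ} (ha : 0 ≤ a) :
    weibullMeasure α (Ioi a) = ENNReal.ofReal (exp (-a ^ α)) := by
  have hcont : ContinuousWithinAt (fun v : ℝ => -exp (-v ^ α)) (Ici a) a :=
    (continuous_exp.comp (Real.continuous_rpow_const hα.le).neg).neg.continuousWithinAt
  have hderiv : ∀ v ∈ Ioi a, HasDerivAt (fun v => -exp (-v ^ α))
      (α * v ^ (α - 1) * exp (-v ^ α)) v :=
    fun v hv => hasDerivAt_neg_exp_neg_rpow (ha.trans_lt hv)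
  have hnonneg : ∀ v ∈ Ioi a, 0 ≤ α * v ^ (α - 1) * exp (-v ^ α) := fun v hv => by
    have := rpow_pos_of_pos (ha.trans_lt hv) (α - 1)
    positivity
  have hlim : Tendsto (fun v : ℝ => -exp (-v ^ α)) atTop (𝓝 (-0)) :=
    (tendsto_exp_atBot.comp (tendsto_neg_atTop_atBot.comp (tendsto_rpow_atTop hα))).neg
  rw [weibullMeasure, withDensity_apply _ measurableSet_Ioi, Measure.restrict_restrict
    measurableSet_Ioi, Ioi_inter_Ioi, sup_eq_left.mpr ha, ← ofReal_integral_eq_lintegral_ofReal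
    (integrableOn_Ioi_deriv_of_nonneg hcont hderiv hnonneg hlim)
    ((ae_restrict_iff' measurableSet_Ioi).mpr (ae_of_all _ hnonneg)),
    integral_Ioi_of_hasDerivAt_of_nonneg hcont hderiv hnonneg hlim]
  simp

lemma weibullMeasure_compl_Ioi_zero : weibullMeasure α (Ioi 0)ᶜ = 0 :=
  withDensity_absolutelyContinuous _ _ (by simp [Iic_inter_Ioi])

lemma isProbabilityMeasure_weibullMeasure (hα : 0 < α) :
    IsProbabilityMeasure (weibullMeasure α) where
  measure_univ := by
    rw [← measure_inter_conull weibullMeasure_compl_Ioi_zero, univ_inter,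
      weibullMeasure_Ioi hα le_rfl, zero_rpow hα.ne']
    simp

lemma weibullMeasure_Ici (hα : 0 < α) {a : ℝ} (ha : 0 ≤ a) :
    weibullMeasure α (Ici a) = ENNReal.ofReal (exp (-a ^ α)) := by
  have hac : weibullMeasure α ≪ volume :=
    (withDensity_absolutelyContinuous _ _).trans Measure.absolutelyContinuous_restrict
  rw [← weibullMeasure_Ioi hα ha, measure_congr (hac.ae_eq Ioi_ae_eq_Ici).symm]

lemma integral_exp_neg_div_weibullMeasure (hα : 0 ≤ α) (t : ℝ) :
    ∫ v, exp (-t / v) ∂weibullMeasure α = weibullInvMgf t α := by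
  rw [weibullMeasure, integral_withDensity_eq_integral_toReal_smul (by fun_prop)
    (ae_of_all _ fun _ => ENNReal.ofReal_lt_top), weibullInvMgf, ← integral_const_mul]
  refine setIntegral_congr_fun measurableSet_Ioi fun v (hv : 0 < v) => ?_
  have := rpow_pos_of_pos hv (α - 1)
  rw [ENNReal.toReal_ofReal (by positivity), smul_eq_mul, exp_sub, exp_neg]
  ring

lemma integrable_exp_neg_div_weibullMeasure (hα : 0 < α) {t : ℝ} (ht : 0 ≤ t) :
    Integrable (fun v => exp (-t / v)) (weibullMeasure α) := by
  have := isProbabilityMeasure_weibullMeasure hα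
  refine Integrable.of_bound (by fun_prop) 1 ?_
  filter_upwards [mem_ae_iff.mpr weibullMeasure_compl_Ioi_zero] with v (hv : 0 < v)
  rw [norm_of_nonneg (exp_pos _).le, exp_le_one_iff]
  exact div_nonpos_of_nonpos_of_nonneg (neg_nonpos.mpr ht) hv.le

lemma neg_exp_le_iff {ξ μ σ x v : ℝ} (hξ : 0 < ξ) (hσ : 0 < σ) (hx : x < 0) (hv : 0 < v) :
    -exp (μ + σ / ξ * (1 - v⁻¹)) ≤ x ↔ 1 ≤ (1 - ξ / σ * log (exp (-μ) * |x|)) * v := by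
  have key : (1 - ξ / σ * log (exp (-μ) * |x|)) * v - 1
      = ξ / σ * v * (μ + σ / ξ * (1 - v⁻¹) - log (-x)) := by
    rw [log_mul (exp_ne_zero _) (abs_ne_zero.mpr hx.ne), log_exp, abs_of_neg hx]
    field_simp
    ring
  rw [neg_le, ← log_le_iff_le_exp (neg_pos.mpr hx), ← sub_nonneg, ← sub_nonneg (b := 1), key]
  exact (mul_nonneg_iff_of_pos_left (by positivity)).symm

lemma map_weibullMeasure_Iic {ξ μ σ : ℝ} (hξ : 0 < ξ) (hσ : 0 < σ) (x : ℝ) :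
    (weibullMeasure (1 / ξ)).map (fun v => -exp (μ + σ / ξ * (1 - v⁻¹))) (Iic x)
      = ENNReal.ofReal (L2 ξ μ σ x) := by
  have hα : 0 < 1 / ξ := by positivity
  have := isProbabilityMeasure_weibullMeasure hα
  rw [Measure.map_apply (by fun_prop) measurableSet_Iic]
  rcases le_or_gt 0 x with hx | hx
  · have : (fun v => -exp (μ + σ / ξ * (1 - v⁻¹))) ⁻¹' Iic x = univ :=
      eq_univ_of_forall fun v => (neg_neg_of_pos (exp_pos _)).le.trans hx
    rw [this, measure_univ, L2, if_neg hx.not_gt, ENNReal.ofReal_one]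
  set c := 1 - ξ / σ * log (exp (-μ) * |x|) with hc_def
  have hmem : ∀ v, 0 < v → (-exp (μ + σ / ξ * (1 - v⁻¹)) ≤ x ↔ 1 ≤ c * v) :=
    fun v hv => neg_exp_le_iff hξ hσ hx hv
  rw [← measure_inter_conull weibullMeasure_compl_Ioi_zero]
  rcases lt_or_ge 0 c with hc | hc
  · have : (fun v => -exp (μ + σ / ξ * (1 - v⁻¹))) ⁻¹' Iic x ∩ Ioi 0 = Ici (1 / c) := by
      ext v
      simp only [mem_inter_iff, mem_preimage, mem_Iic, mem_Ioi, mem_Ici, div_le_iff₀ hc]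
      constructor
      · rintro ⟨hle, hv⟩
        linarith [(hmem v hv).mp hle]
      · intro hv
        have hv0 : 0 < v := by nlinarith
        exact ⟨(hmem v hv0).mpr (by linarith), hv0⟩
    rw [this, weibullMeasure_Ici hα (by positivity), L2, if_pos hx, ← hc_def, if_pos hc,
      one_div c, inv_rpow hc.le, neg_div, rpow_neg hc.le]
  · have : (fun v => -exp (μ + σ / ξ * (1 - v⁻¹))) ⁻¹' Iic x ∩ Ioi 0 = ∅ := by
      ext v
      simp only [mem_inter_iff, mem_preimage, mem_Iic, mem_Ioi, mem_empty_iff_false, iff_false]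
      rintro ⟨hle, hv⟩
      have := (hmem v hv).mp hle
      nlinarith
    simp [this, L2, hx, ← hc_def, hc.not_gt, hξ]

end ProbabilityTheory

open ProbabilityTheory

theorem stmt_6_general {Ω : Type*} [MeasurableSpace Ω] (P : Measure Ω) [IsProbabilityMeasure P]
    (ξ μ σ k : ℝ) (hξ : 0 < ξ) (hσ : 0 < σ) (hk : 0 < k)
    (X : Ω → ℝ) (hXm : Measurable X)
    (hdf : ∀ x : ℝ, (P {ω | X ω ≤ x}).toReal = L2 ξ μ σ x) :
    Integrable (fun ω => |X ω| ^ k) P ∧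
      ∫ ω, |X ω| ^ k ∂P =
        Real.exp (k * (μ + σ / ξ)) * weibullInvMgf (k * σ / ξ) (1 / ξ) := by
  have hα : 0 < 1 / ξ := by positivity
  have := isProbabilityMeasure_weibullMeasure hα
  have hlaw : IdentDistrib X (fun v => -exp (μ + σ / ξ * (1 - v⁻¹))) P (weibullMeasure (1 / ξ)) :=
    ⟨hXm.aemeasurable, by fun_prop, Measure.ext_of_Iic _ _ fun x => by
      rw [map_weibullMeasure_Iic hξ hσ, Measure.map_apply hXm measurableSet_Iic, ← hdf,
        ENNReal.ofReal_toReal (measure_ne_top _ _)]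
      rfl⟩
  have hpow : ∀ v : ℝ, |-exp (μ + σ / ξ * (1 - v⁻¹))| ^ k
      = exp (k * (μ + σ / ξ)) * exp (-(k * σ / ξ) / v) := fun v => by
    rw [abs_neg, abs_of_pos (exp_pos _), ← exp_mul, ← exp_add]
    ring_nf
  have hmoment := hlaw.comp (u := fun y => |y| ^ k) (by fun_prop)
  simp only [Function.comp_def, hpow] at hmoment
  refine ⟨hmoment.integrable_iff.mpr
    ((integrable_exp_neg_div_weibullMeasure hα (by positivity)).const_mul _), ?_⟩
  rw [hmoment.integral_eq, integral_const_mul, integral_exp_neg_div_weibullMeasure hα.le]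

/-- For `ξ > 0`, `σ > 0`, `k > 0`, if `X` is a negative random
variable with distribution function `L_{2,ξ}(·; μ, σ)`, then the `k`-th absolute
moment of `X` exists and `E(|X|^k) = e^{k(μ + σ/ξ)} M_{Y⁻¹}(kσ/ξ; 1/ξ)`. -/
theorem stmt_6 {Ω : Type*} [MeasurableSpace Ω] (P : Measure Ω) [IsProbabilityMeasure P]
    (ξ μ σ k : ℝ) (hξ : 0 < ξ) (hσ : 0 < σ) (hk : 0 < k)
    (X : Ω → ℝ) (hXm : Measurable X) (hXneg : ∀ ω, X ω < 0)
    (hdf : ∀ x : ℝ, (P {ω | X ω ≤ x}).toReal = L2 ξ μ σ x) :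
    Integrable (fun ω => |X ω| ^ k) P ∧
      ∫ ω, |X ω| ^ k ∂P =
        Real.exp (k * (μ + σ / ξ)) * weibullInvMgf (k * σ / ξ) (1 / ξ) :=
  stmt_6_general P ξ μ σ k hξ hσ hk X hXm hdf
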